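/- arXiv:2507.17608 — 4 statements merged into one kernel-verified Lean document; each statement's English description precedes it below -/
import Mathlib

section
/- For integers m ≥ 1 and t with t² < 4m, the coefficient P_{k,r}(t,m) of x^{k-r-1} in the power series expansion of 1/(1 - t x + m x²)^r satisfies |P_{k,r}(t,m)| ≤ C(k-2, r-1) · 2^r · m^{(k-1)/2} / (4m - t²)^{r/2}. -/
open PowerSeries

open Finset

noncomputable def uSeq (t m : ℝ) : ℕ → ℝ
  | 0 => 1
  | 1 => t
  | (n+2) => t * uSeq t m (n+1) - m * uSeq t m n

lemma uSeq_mul_eq_one (t m : ℝ) :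
    (1 - PowerSeries.C (R := ℝ) t * PowerSeries.X + PowerSeries.C (R := ℝ) m * PowerSeries.X ^ 2) *
      PowerSeries.mk (uSeq t m) = 1 := by
  have hexp : (1 - PowerSeries.C (R := ℝ) t * PowerSeries.X + PowerSeries.C (R := ℝ) m * PowerSeries.X ^ 2) *
      PowerSeries.mk (uSeq t m) =
      PowerSeries.mk (uSeq t m) - PowerSeries.C (R := ℝ) t * (PowerSeries.X * PowerSeries.mk (uSeq t m))
        + PowerSeries.C (R := ℝ) m * (PowerSeries.X ^ 2 * PowerSeries.mk (uSeq t m)) := by ring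
  rw [hexp]
  ext n
  match n with
  | 0 => simp [uSeq, coeff_X_pow_mul']
  | 1 => simp [uSeq, coeff_X_pow_mul', coeff_succ_X_mul]
  | (n+2) =>
    have h2 : PowerSeries.coeff (R := ℝ) (n+2) (PowerSeries.X ^ 2 * PowerSeries.mk (uSeq t m))
        = uSeq t m n := by
      simpa using coeff_X_pow_mul (PowerSeries.mk (uSeq t m)) 2 n
    simp [uSeq, coeff_succ_X_mul, h2, coeff_one]
open Finset

lemma multiset_card_sum {ι β : Type*} (s : Finset ι) (f : ι → Multiset β) :
    Multiset.card (∑ i ∈ s, f i) = ∑ i ∈ s, Multiset.card (f i) := by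
  classical
  induction s using Finset.cons_induction with
  | empty => simp
  | cons a s ha ih => simp [Finset.sum_cons, ih]

lemma card_finsuppAntidiag_le (r n : ℕ) (hr : 1 ≤ r) :
    ((Finset.range r).finsuppAntidiag n).card ≤ (n + r - 1).choose (r - 1) := by
  classical
  set T : Finset (Multiset (Fin r)) :=
    (Finset.univ : Finset (Sym (Fin r) n)).image Sym.toMultiset with hT
  have hinj : Function.Injective (Sym.toMultiset : Sym (Fin r) n → Multiset (Fin r)) :=
    fun a b h => Sym.coe_injective h
  have hcardT : T.card = Fintype.card (Sym (Fin r) n) := by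
    rw [hT, Finset.card_image_of_injective _ hinj, Finset.card_univ]
  have hle : ((Finset.range r).finsuppAntidiag n).card ≤ T.card := by
    apply Finset.card_le_card_of_injOn
      (fun l => ∑ i : Fin r, l (i : ℕ) • ({i} : Multiset (Fin r)))
    · intro l hl
      rw [Finset.mem_coe, Finset.mem_finsuppAntidiag] at hl
      have hcard : Multiset.card (∑ i : Fin r, l (i : ℕ) • ({i} : Multiset (Fin r))) = n := by
        rw [multiset_card_sum]
        simp only [Multiset.card_nsmul, Multiset.card_singleton, mul_one]
        rw [Fin.sum_univ_eq_sum_range (fun i => l i) r]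
        exact hl.1
      rw [Finset.mem_coe, hT, Finset.mem_image]
      exact ⟨⟨_, hcard⟩, Finset.mem_univ _, rfl⟩
    · intro l1 h1 l2 h2 heq
      simp only [Finset.mem_coe, Finset.mem_finsuppAntidiag] at h1 h2
      have hcount : ∀ l : ℕ →₀ ℕ, ∀ j : Fin r,
          Multiset.count j (∑ i : Fin r, l (i : ℕ) • ({i} : Multiset (Fin r))) = l (j : ℕ) := by
        intro l j
        rw [Multiset.count_sum']
        simp only [Multiset.count_nsmul, Multiset.count_singleton]
        rw [Finset.sum_eq_single j (by intro b _ hb; simp [Ne.symm hb])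
          (by intro h; exact absurd (Finset.mem_univ j) h)]
        simp
      ext x
      by_cases hx : x < r
      · have := congrArg (Multiset.count (⟨x, hx⟩ : Fin r)) heq
        rwa [hcount l1, hcount l2] at this
      · have hx1 : x ∉ l1.support := fun hmem => hx (Finset.mem_range.1 (h1.2 hmem))
        have hx2 : x ∉ l2.support := fun hmem => hx (Finset.mem_range.1 (h2.2 hmem))
        rw [Finsupp.notMem_support_iff.1 hx1, Finsupp.notMem_support_iff.1 hx2]
  calc ((Finset.range r).finsuppAntidiag n).card ≤ T.card := hle
    _ = Fintype.card (Sym (Fin r) n) := hcardT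
    _ = (r + n - 1).choose n := by rw [Sym.card_sym_eq_choose, Fintype.card_fin]
    _ = (n + r - 1).choose (r - 1) := by
        rw [show n + r - 1 = r + n -1 by omega]
        rw [show r - 1 = (r + n - 1) - n by omega]
        exact (Nat.choose_symm (by omega)).symm
lemma uSeq_abs_le (t m : ℝ) (hm : 1 ≤ m) (ht : t ^ 2 < 4 * m) (n : ℕ) :
    |uSeq t m n| ≤ 2 * Real.sqrt m ^ (n + 1) / Real.sqrt (4 * m - t ^ 2) := by
  set s := Real.sqrt (4 * m - t ^ 2) with hs
  have hs2 : s ^ 2 = 4 * m - t ^ 2 := Real.sq_sqrt (by linarith)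
  have hspos : 0 < s := Real.sqrt_pos.2 (by linarith)
  set ρ : ℂ := (t : ℂ) / 2 + (s : ℂ) / 2 * Complex.I with hρ
  set σ : ℂ := (t : ℂ) / 2 - (s : ℂ) / 2 * Complex.I with hσ
  have hsum : ρ + σ = (t : ℂ) := by rw [hρ, hσ]; push_cast; ring
  have hsC : (s : ℂ) ^ 2 = 4 * (m : ℂ) - (t : ℂ) ^ 2 := by
    rw [← Complex.ofReal_pow, hs2]; push_cast; ring
  have hprod : ρ * σ = (m : ℂ) := by
    rw [hρ, hσ]
    push_cast
    linear_combination (-(s:ℂ)^2/4) * Complex.I_sq + (1/4) * hsC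
  have hρ2 : ρ ^ 2 = (t:ℂ) * ρ - (m:ℂ) := by linear_combination (-ρ) * hsum + hprod + ((s:ℂ)^2/2) * Complex.I_sq + (-(1:ℂ)/2) * hsC
  have hσ2 : σ ^ 2 = (t:ℂ) * σ - (m:ℂ) := by linear_combination (-σ) * hsum + hprod + ((s:ℂ)^2/2) * Complex.I_sq + (-(1:ℂ)/2) * hsC
  have key : ∀ n : ℕ, (uSeq t m n : ℂ) * (ρ - σ) = ρ ^ (n+1) - σ ^ (n+1) ∧
      (uSeq t m (n+1) : ℂ) * (ρ - σ) = ρ ^ (n+2) - σ ^ (n+2) := by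
    intro n
    induction n with
    | zero =>
      refine ⟨by simp [uSeq], ?_⟩
      show ((t : ℝ) : ℂ) * (ρ - σ) = ρ ^ 2 - σ ^ 2
      push_cast
      linear_combination (ρ - σ) * hsum
    | succ n ih =>
      refine ⟨ih.2, ?_⟩
      show ((t * uSeq t m (n+1) - m * uSeq t m n : ℝ) : ℂ) * (ρ - σ) = ρ ^ (n+3) - σ ^ (n+3)
      push_cast
      linear_combination (t:ℂ) * ih.2 - (m:ℂ) * ih.1 - ρ^(n+1) * hρ2 + σ^(n+1) * hσ2
  have hdiff : ρ - σ = (s : ℂ) * Complex.I := by rw [hρ, hσ]; ring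
  have hconj : (starRingEnd ℂ) ρ = σ := by
    rw [hρ, hσ]
    simp [map_add, map_mul, map_div₀, map_ofNat, Complex.conj_ofReal, Complex.conj_I]
    ring
  have hns : Complex.normSq ρ = m := by
    have h := Complex.mul_conj ρ
    rw [hconj, hprod] at h
    exact_mod_cast h.symm
  have habsρ : ‖ρ‖ = Real.sqrt m := by rw [Complex.norm_def, hns]
  have habsσ : ‖σ‖ = Real.sqrt m := by rw [← hconj, Complex.norm_conj, habsρ]
  have hmain : |uSeq t m n| * s ≤ 2 * Real.sqrt m ^ (n + 1) := by
    have h1 : ‖(uSeq t m n : ℂ) * (ρ - σ)‖ = |uSeq t m n| * s := by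
      rw [hdiff, norm_mul, norm_mul, Complex.norm_real, Complex.norm_real, Complex.norm_I,
        Real.norm_eq_abs, Real.norm_eq_abs]
      rw [abs_of_pos hspos]
      ring
    have h2 := (key n).1
    calc |uSeq t m n| * s = ‖ρ ^ (n+1) - σ ^ (n+1)‖ := by rw [← h1, h2]
      _ ≤ ‖ρ ^ (n+1)‖ + ‖σ ^ (n+1)‖ := by
          exact norm_sub_le _ _
      _ = 2 * Real.sqrt m ^ (n + 1) := by rw [norm_pow, norm_pow, habsρ, habsσ]; ring
  rw [le_div_iff₀ hspos]
  exact hmain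

/-- bound on `P_{k,r}(t,m)`, the coefficient of `x^(k-r-1)` in
`(1 - t x + m x^2)^{-r}`. -/
theorem stmt_0 (k r : ℕ) (hr1 : 1 ≤ r) (hrk : r ≤ k - 1) (m t : ℤ) (hm : 1 ≤ m)
    (ht : t ^ 2 < 4 * m) :
    |PowerSeries.coeff (R := ℝ) (k - r - 1)
        (((1 - PowerSeries.C (R := ℝ) (t : ℝ) * PowerSeries.X
            + PowerSeries.C (R := ℝ) (m : ℝ) * PowerSeries.X ^ 2)⁻¹) ^ r)|
      ≤ (Nat.choose (k - 2) (r - 1) : ℝ) * 2 ^ r * (m : ℝ) ^ (((k : ℝ) - 1) / 2)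
        / ((4 * (m : ℝ) - (t : ℝ) ^ 2) ^ ((r : ℝ) / 2)) := by
  classical
  have hk : r + 1 ≤ k := by omega
  have hmR : (1 : ℝ) ≤ (m : ℝ) := by exact_mod_cast hm
  have htR : (t : ℝ) ^ 2 < 4 * (m : ℝ) := by exact_mod_cast ht
  set n := k - r - 1 with hn
  set M := Real.sqrt (m : ℝ) with hM
  set S := Real.sqrt (4 * (m : ℝ) - (t : ℝ) ^ 2) with hS
  have hSpos : 0 < S := Real.sqrt_pos.2 (by linarith)
  have hMpos : 0 < M := Real.sqrt_pos.2 (by linarith)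
  -- inverse is mk uSeq
  have hconst : PowerSeries.constantCoeff (R := ℝ)
      (1 - PowerSeries.C (R := ℝ) (t : ℝ) * PowerSeries.X
        + PowerSeries.C (R := ℝ) (m : ℝ) * PowerSeries.X ^ 2) ≠ 0 := by
    simp
  have hg : (1 - PowerSeries.C (R := ℝ) (t : ℝ) * PowerSeries.X
      + PowerSeries.C (R := ℝ) (m : ℝ) * PowerSeries.X ^ 2)⁻¹
      = PowerSeries.mk (uSeq (t : ℝ) (m : ℝ)) := by
    symm
    rw [PowerSeries.eq_inv_iff_mul_eq_one hconst, mul_comm]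
    exact uSeq_mul_eq_one _ _
  rw [hg, PowerSeries.coeff_pow]
  simp only [PowerSeries.coeff_mk]
  set A := (Finset.range r).finsuppAntidiag n with hA
  have hterm : ∀ l ∈ A, |∏ i ∈ Finset.range r, uSeq (t : ℝ) (m : ℝ) (l i)|
      ≤ 2 ^ r * M ^ (n + r) / S ^ r := by
    intro l hl
    rw [Finset.mem_finsuppAntidiag] at hl
    rw [Finset.abs_prod]
    have hb : ∀ i ∈ Finset.range r, |uSeq (t : ℝ) (m : ℝ) (l i)| ≤ 2 * M ^ (l i + 1) / S :=
      fun i _ => uSeq_abs_le _ _ hmR htR _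
    calc ∏ i ∈ Finset.range r, |uSeq (t : ℝ) (m : ℝ) (l i)|
        ≤ ∏ i ∈ Finset.range r, (2 * M ^ (l i + 1) / S) :=
          Finset.prod_le_prod (fun i _ => abs_nonneg _) hb
      _ = 2 ^ r * M ^ (n + r) / S ^ r := by
          rw [Finset.prod_div_distrib, Finset.prod_const, Finset.prod_mul_distrib,
            Finset.prod_const, Finset.prod_pow_eq_pow_sum, Finset.card_range]
          congr 2
          rw [Finset.sum_add_distrib, Finset.sum_const, Finset.card_range, smul_eq_mul, mul_one,
            hl.1]
  have hsum : |∑ l ∈ A, ∏ i ∈ Finset.range r, uSeq (t : ℝ) (m : ℝ) (l i)|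
      ≤ (A.card : ℝ) * (2 ^ r * M ^ (n + r) / S ^ r) := by
    calc |∑ l ∈ A, ∏ i ∈ Finset.range r, uSeq (t : ℝ) (m : ℝ) (l i)|
        ≤ ∑ l ∈ A, |∏ i ∈ Finset.range r, uSeq (t : ℝ) (m : ℝ) (l i)| :=
          Finset.abs_sum_le_sum_abs _ _
      _ ≤ (A.card : ℝ) * (2 ^ r * M ^ (n + r) / S ^ r) := by
          simpa using Finset.sum_le_card_nsmul A _ _ hterm
  have hcard : (A.card : ℝ) ≤ ((k - 2).choose (r - 1) : ℝ) := by
    have := card_finsuppAntidiag_le r n hr1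
    rw [show n + r - 1 = k - 2 by omega] at this
    exact_mod_cast this
  have hbpos : (0 : ℝ) ≤ 2 ^ r * M ^ (n + r) / S ^ r := by positivity
  have hfinal : |∑ l ∈ A, ∏ i ∈ Finset.range r, uSeq (t : ℝ) (m : ℝ) (l i)|
      ≤ ((k - 2).choose (r - 1) : ℝ) * (2 ^ r * M ^ (n + r) / S ^ r) :=
    hsum.trans (mul_le_mul_of_nonneg_right hcard hbpos)
  -- convert powers to rpow
  have hMr : M ^ (n + r) = (m : ℝ) ^ (((k : ℝ) - 1) / 2) := by
    rw [show n + r = k - 1 by omega, hM, Real.sqrt_eq_rpow, ← Real.rpow_natCast _ (k-1),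
      ← Real.rpow_mul (by linarith)]
    congr 1
    rw [Nat.cast_sub (by omega)]
    push_cast
    ring
  have hSr : S ^ r = (4 * (m : ℝ) - (t : ℝ) ^ 2) ^ ((r : ℝ) / 2) := by
    rw [hS, Real.sqrt_eq_rpow, ← Real.rpow_natCast _ r, ← Real.rpow_mul (by linarith)]
    congr 1
    ring
  rw [hMr, hSr] at hfinal
  calc |∑ l ∈ A, ∏ i ∈ Finset.range r, uSeq (t : ℝ) (m : ℝ) (l i)|
      ≤ ((k - 2).choose (r - 1) : ℝ)
        * (2 ^ r * (m : ℝ) ^ (((k : ℝ) - 1) / 2) / (4 * (m : ℝ) - (t : ℝ) ^ 2) ^ ((r : ℝ) / 2)) :=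
      hfinal
    _ = (Nat.choose (k - 2) (r - 1) : ℝ) * 2 ^ r * (m : ℝ) ^ (((k : ℝ) - 1) / 2)
        / ((4 * (m : ℝ) - (t : ℝ) ^ 2) ^ ((r : ℝ) / 2)) := by ring
end

section
/- For any permutation τ of {1,…,n} and integers 0 ≤ ℓ₁ < ⋯ < ℓₙ, one has Π_{i=1}^n 4^{ℓ_i(τ(i)-1)} ≤ (4/3)^{n(n-1)/2} · Π_{1≤i<j≤n} (4^{ℓ_j} - 4^{ℓ_i}). -/
open Finset

/-- for any permutation `τ` and strictly increasing `ℓ`,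
`∏ i, 4^(ℓ i (τ i - 1)) ≤ (4/3)^(n(n-1)/2) ∏_{i<j} (4^(ℓ j) - 4^(ℓ i))`
(0-indexed). -/
theorem stmt_10 (n : ℕ) (ℓ : Fin n → ℕ) (hℓ : StrictMono ℓ) (τ : Equiv.Perm (Fin n)) :
    (∏ i : Fin n, (4 : ℝ) ^ (ℓ i * ((τ i : ℕ))))
      ≤ (4 / 3 : ℝ) ^ (n * (n - 1) / 2)
        * ∏ i : Fin n, ∏ j ∈ Finset.Ioi i, ((4 : ℝ) ^ (ℓ j) - 4 ^ (ℓ i)) := by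
  set P := n * (n - 1) / 2 with hP
  -- rearrangement: sum with τ ≤ sum with identity
  have hm : Monovary ℓ (fun i : Fin n => (i : ℕ)) := by
    intro i j h
    exact (hℓ.monotone (le_of_lt h))
  have hsum : ∑ i : Fin n, ℓ i * (τ i : ℕ) ≤ ∑ i : Fin n, ℓ i * (i : ℕ) := by
    simpa [smul_eq_mul] using hm.sum_smul_comp_perm_le_sum_smul (σ := τ)
  have hL : (∏ i : Fin n, (4 : ℝ) ^ (ℓ i * ((τ i : ℕ))))
      ≤ (4 : ℝ) ^ (∑ i : Fin n, ℓ i * (i : ℕ)) := by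
    rw [Finset.prod_pow_eq_pow_sum]
    exact pow_le_pow_right₀ (by norm_num) hsum
  -- swap lemma
  have swap : ∀ f : Fin n → ℝ, ∏ i : Fin n, ∏ j ∈ Ioi i, f j = ∏ j : Fin n, f j ^ (j : ℕ) := by
    intro f
    rw [Finset.prod_comm' (s' := fun j => Iio j) (t' := univ)
      (by simp [Finset.mem_Ioi, Finset.mem_Iio])]
    simp [Finset.prod_const, Fin.card_Iio]
  have hcard : ∑ j : Fin n, (j : ℕ) = P := by
    rw [hP, Fin.sum_univ_eq_sum_range (fun i => i) n]
    exact Finset.sum_range_id n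
  have hmid : ∏ i : Fin n, ∏ j ∈ Ioi i, ((3 / 4 : ℝ) * 4 ^ (ℓ j))
      = (3 / 4 : ℝ) ^ P * 4 ^ (∑ i : Fin n, ℓ i * (i : ℕ)) := by
    rw [swap]
    simp_rw [mul_pow, Finset.prod_mul_distrib, Finset.prod_pow_eq_pow_sum, ← pow_mul]
    rw [hcard, Finset.prod_pow_eq_pow_sum]
  have hprod : ∏ i : Fin n, ∏ j ∈ Ioi i, ((3 / 4 : ℝ) * 4 ^ (ℓ j))
      ≤ ∏ i : Fin n, ∏ j ∈ Ioi i, ((4 : ℝ) ^ (ℓ j) - 4 ^ (ℓ i)) := by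
    apply Finset.prod_le_prod
    · intro i _
      exact Finset.prod_nonneg fun j _ => by positivity
    · intro i _
      apply Finset.prod_le_prod
      · intro j _; positivity
      · intro j hj
        have hij : i < j := Finset.mem_Ioi.mp hj
        have hl : ℓ i + 1 ≤ ℓ j := hℓ hij
        have h4 : (4 : ℝ) ^ (ℓ i + 1) ≤ 4 ^ (ℓ j) :=
          pow_le_pow_right₀ (by norm_num) hl
        rw [pow_succ] at h4
        nlinarith [pow_pos (by norm_num : (0:ℝ) < 4) (ℓ i), pow_pos (by norm_num : (0:ℝ) < 4) (ℓ j)]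
  have hone : (4 / 3 : ℝ) ^ P * (3 / 4 : ℝ) ^ P = 1 := by
    rw [← mul_pow]; norm_num
  calc (∏ i : Fin n, (4 : ℝ) ^ (ℓ i * ((τ i : ℕ))))
      ≤ (4 : ℝ) ^ (∑ i : Fin n, ℓ i * (i : ℕ)) := hL
    _ = (4 / 3 : ℝ) ^ P * ((3 / 4 : ℝ) ^ P * 4 ^ (∑ i : Fin n, ℓ i * (i : ℕ))) := by
        rw [← mul_assoc, hone, one_mul]
    _ = (4 / 3 : ℝ) ^ P * ∏ i : Fin n, ∏ j ∈ Ioi i, ((3 / 4 : ℝ) * 4 ^ (ℓ j)) := by rw [hmid]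
    _ ≤ (4 / 3 : ℝ) ^ P * ∏ i : Fin n, ∏ j ∈ Ioi i, ((4 : ℝ) ^ (ℓ j) - 4 ^ (ℓ i)) := by
        apply mul_le_mul_of_nonneg_left hprod (by positivity)
end

section
/- Let n ≥ 1 and let A be an n×n real matrix with entries A_{ij} = a_i^{j-1}(1 + ε_{ij}), where a_i = 4^{ℓ_i} for integers 0 ≤ ℓ₁ < ⋯ < ℓₙ and the ε_{ij} are real numbers. If for every permutation τ ∈ Sₙ, |Π_{i=1}^n (1 + ε_{i,τ(i)}) − 1| < (3/4)^{n(n-1)/2} / n!, then det A ≠ 0 (in fact det A > 0). -/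
open Finset

/-- nonsingularity criterion. If `A i j = 4^(ℓ i · (j-1)) (1 + ε i j)`
(0-indexed) with `ℓ` strictly increasing, and for every permutation `τ`,
`|∏ i (1 + ε i (τ i)) − 1| < (3/4)^(n(n-1)/2) / n!`, then `det A > 0`
(in particular `det A ≠ 0`). -/
theorem stmt_13 (n : ℕ) (hn : 1 ≤ n) (ℓ : Fin n → ℕ) (hℓ : StrictMono ℓ)
    (ε : Fin n → Fin n → ℝ) (A : Matrix (Fin n) (Fin n) ℝ)
    (hA : ∀ i j, A i j = (4 : ℝ) ^ (ℓ i * (j : ℕ)) * (1 + ε i j))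
    (hε : ∀ τ : Equiv.Perm (Fin n),
      |(∏ i : Fin n, (1 + ε i (τ i))) - 1|
        < (3 / 4 : ℝ) ^ (n * (n - 1) / 2) / (Nat.factorial n : ℝ)) :
    0 < A.det := by
  classical
  have h4 : (0:ℝ) < 4 := by norm_num
  set v : Fin n → ℝ := fun i => (4:ℝ) ^ (ℓ i) with hv
  have hvpos : ∀ i, 0 < v i := fun i => pow_pos h4 _
  set C : ℕ := n * (n - 1) / 2 with hC
  set S : ℕ := ∑ i : Fin n, ℓ i * (i : ℕ) with hS
  set c : ℝ := (3/4:ℝ)^C / (n.factorial : ℝ) with hc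
  set B := Matrix.vandermonde v with hB
  have hfact : (0:ℝ) < (n.factorial : ℝ) := by exact_mod_cast n.factorial_pos
  -- swapped Vandermonde formula
  have hdetB : B.det = ∏ j : Fin n, ∏ i ∈ Finset.Iio j, (v j - v i) := by
    rw [hB, Matrix.det_vandermonde]
    exact Finset.prod_comm' (by simp [and_comm])
  have hvlt : ∀ {i j : Fin n}, i < j → v i < v j := by
    intro i j hij
    exact pow_lt_pow_right₀ (by norm_num) (hℓ hij)
  have hdetBpos : 0 < B.det := by
    rw [hdetB]
    refine Finset.prod_pos fun j _ => Finset.prod_pos fun i hi => ?_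
    exact sub_pos.2 (hvlt (Finset.mem_Iio.1 hi))
  -- lower bound on Vandermonde
  have hVdm : (3/4:ℝ)^C * (4:ℝ)^S ≤ B.det := by
    have h1 : ∀ j : Fin n, ((3/4:ℝ) * v j) ^ (j:ℕ) ≤ ∏ i ∈ Finset.Iio j, (v j - v i) := by
      intro j
      rw [← Fin.card_Iio j, ← Finset.prod_const]
      refine Finset.prod_le_prod (fun i _ => by positivity) fun i hi => ?_
      have hij : i < j := Finset.mem_Iio.1 hi
      have h41 : v i * 4 ≤ v j := by
        have h' : (4:ℝ) ^ (ℓ i + 1) ≤ (4:ℝ) ^ (ℓ j) :=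
          pow_le_pow_right₀ (by norm_num) (hℓ hij)
        calc v i * 4 = (4:ℝ) ^ (ℓ i + 1) := by rw [hv, pow_succ]
        _ ≤ v j := h'
      nlinarith [hvpos i, hvpos j]
    have h2 : ∏ j : Fin n, ((3/4:ℝ) * v j)^(j:ℕ) ≤ B.det := by
      rw [hdetB]
      exact Finset.prod_le_prod (fun j _ => by positivity) fun j _ => h1 j
    have h3 : ∏ j : Fin n, ((3/4:ℝ) * v j)^(j:ℕ) = (3/4:ℝ)^C * (4:ℝ)^S := by
      have he : ∀ j : Fin n, ((3/4:ℝ) * v j)^(j:ℕ)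
          = (3/4:ℝ)^(j:ℕ) * (4:ℝ)^(ℓ j * (j:ℕ)) := by
        intro j; rw [mul_pow, hv, ← pow_mul]
      rw [Finset.prod_congr rfl fun j _ => he j, Finset.prod_mul_distrib,
        Finset.prod_pow_eq_pow_sum, Finset.prod_pow_eq_pow_sum, ← hS]
      congr 2
      rw [hC, Fin.sum_univ_eq_sum_range (fun i => i), Finset.sum_range_id]
    linarith [h3 ▸ h2]
  -- rearrangement : exponent sums bounded by S
  have hrearr : ∀ σ : Equiv.Perm (Fin n), (∑ i : Fin n, ℓ i * ((σ i : Fin n) : ℕ)) ≤ S := by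
    intro σ
    have hmono : Monovary (fun i : Fin n => ((i:ℕ):ℝ)) (fun i : Fin n => (ℓ i : ℝ)) := by
      intro i j hij
      have h1 : ℓ i < ℓ j := Nat.cast_lt.1 hij
      have hij' : i < j := hℓ.lt_iff_lt.1 h1
      exact Nat.cast_le.2 (Fin.le_def.1 hij'.le)
    have hre := hmono.sum_comp_perm_mul_le_sum_mul (σ := σ)
    have hcast : ((∑ i : Fin n, ℓ i * ((σ i : Fin n) : ℕ) : ℕ) : ℝ) ≤ ((S : ℕ) : ℝ) := by
      rw [hS]
      push_cast
      calc (∑ i : Fin n, (ℓ i : ℝ) * (((σ i : Fin n) : ℕ) : ℝ))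
          = ∑ i : Fin n, (((σ i : Fin n) : ℕ) : ℝ) * (ℓ i : ℝ) :=
            Finset.sum_congr rfl fun i _ => by ring
        _ ≤ ∑ i : Fin n, ((i : ℕ) : ℝ) * (ℓ i : ℝ) := hre
        _ = ∑ i : Fin n, (ℓ i : ℝ) * ((i : ℕ) : ℝ) :=
            Finset.sum_congr rfl fun i _ => by ring
    exact_mod_cast hcast
  -- expansions of det A and det B
  have hAe : A.det = ∑ σ : Equiv.Perm (Fin n),
      ((Equiv.Perm.sign σ : ℤ) : ℝ) *
        ((4:ℝ)^(∑ i : Fin n, ℓ i * ((σ i : Fin n) : ℕ)) * ∏ i : Fin n, (1 + ε i (σ i))) := by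
    rw [← Matrix.det_transpose, Matrix.det_apply']
    refine Finset.sum_congr rfl fun σ _ => ?_
    congr 1
    have he : ∀ i : Fin n,
        A.transpose (σ i) i = (4:ℝ)^(ℓ i * ((σ i : Fin n) : ℕ)) * (1 + ε i (σ i)) := by
      intro i; rw [Matrix.transpose_apply, hA]
    rw [Finset.prod_congr rfl fun i _ => he i, Finset.prod_mul_distrib,
      Finset.prod_pow_eq_pow_sum]
  have hBe : B.det = ∑ σ : Equiv.Perm (Fin n),
      ((Equiv.Perm.sign σ : ℤ) : ℝ) * ((4:ℝ)^(∑ i : Fin n, ℓ i * ((σ i : Fin n) : ℕ)) * 1) := by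
    rw [← Matrix.det_transpose, Matrix.det_apply']
    refine Finset.sum_congr rfl fun σ _ => ?_
    congr 1
    have he : ∀ i : Fin n, B.transpose (σ i) i = (4:ℝ)^(ℓ i * ((σ i : Fin n) : ℕ)) := by
      intro i
      rw [Matrix.transpose_apply, hB, Matrix.vandermonde, Matrix.of_apply, hv, ← pow_mul]
    rw [Finset.prod_congr rfl fun i _ => he i, Finset.prod_pow_eq_pow_sum, mul_one]
  -- the per-permutation bound
  have hterm : ∀ σ : Equiv.Perm (Fin n),
      -(B.det / (n.factorial : ℝ))
        < ((Equiv.Perm.sign σ : ℤ) : ℝ) *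
            ((4:ℝ)^(∑ i : Fin n, ℓ i * ((σ i : Fin n) : ℕ)) * ∏ i : Fin n, (1 + ε i (σ i)))
          - ((Equiv.Perm.sign σ : ℤ) : ℝ) *
            ((4:ℝ)^(∑ i : Fin n, ℓ i * ((σ i : Fin n) : ℕ)) * 1) := by
    intro σ
    set P : ℝ := (4:ℝ)^(∑ i : Fin n, ℓ i * ((σ i : Fin n) : ℕ)) with hP
    set E : ℝ := ∏ i : Fin n, (1 + ε i (σ i)) with hE
    have hPpos : 0 < P := pow_pos h4 _
    have hsgn : |((Equiv.Perm.sign σ : ℤ) : ℝ)| = 1 := by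
      rcases Int.units_eq_one_or (Equiv.Perm.sign σ) with h | h <;> rw [h] <;> norm_num
    have habs : |((Equiv.Perm.sign σ : ℤ) : ℝ) * (P * E) - ((Equiv.Perm.sign σ : ℤ) : ℝ) * (P * 1)|
        = P * |E - 1| := by
      rw [← mul_sub, abs_mul, hsgn, one_mul,
        show P * E - P * 1 = P * (E - 1) by ring, abs_mul, abs_of_pos hPpos]
    have h1 : P * |E - 1| < P * c := by
      have hh := hε σ
      rw [← hE] at hh
      refine (mul_lt_mul_iff_right₀ hPpos).2 ?_
      rw [hc, hC]; exact hh
    have h2 : P * c ≤ B.det / (n.factorial : ℝ) := by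
      have hPle : P ≤ (4:ℝ)^S := pow_le_pow_right₀ (by norm_num) (hrearr σ)
      have hcpos : 0 < c := by rw [hc]; positivity
      calc P * c ≤ (4:ℝ)^S * c := by nlinarith
        _ = ((3/4:ℝ)^C * (4:ℝ)^S) / (n.factorial : ℝ) := by rw [hc]; ring
        _ ≤ B.det / (n.factorial : ℝ) := by gcongr
    have h3 := abs_lt.1 (habs ▸ lt_of_lt_of_le h1 h2)
    linarith [h3.1]
  -- sum up
  have hdiff : A.det - B.det = ∑ σ : Equiv.Perm (Fin n),
      (((Equiv.Perm.sign σ : ℤ) : ℝ) *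
          ((4:ℝ)^(∑ i : Fin n, ℓ i * ((σ i : Fin n) : ℕ)) * ∏ i : Fin n, (1 + ε i (σ i)))
        - ((Equiv.Perm.sign σ : ℤ) : ℝ) *
          ((4:ℝ)^(∑ i : Fin n, ℓ i * ((σ i : Fin n) : ℕ)) * 1)) := by
    rw [hAe, hBe, Finset.sum_sub_distrib]
  have hcard : (Finset.univ : Finset (Equiv.Perm (Fin n))).card = n.factorial := by
    rw [Finset.card_univ, Fintype.card_perm, Fintype.card_fin]
  have hconst : ∑ _σ : Equiv.Perm (Fin n), -(B.det / (n.factorial : ℝ)) = -B.det := by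
    rw [Finset.sum_const, hcard, nsmul_eq_mul]
    field_simp
  have hlt := Finset.sum_lt_sum_of_nonempty (Finset.univ_nonempty) fun σ _ => hterm σ
  rw [hconst, ← hdiff] at hlt
  linarith
end

section
/- For every positive integer n, √(2π) < n! · eⁿ / n^{n + 1/2} ≤ e. -/
open Real

lemma stirlingSeq_strict_succ (m : ℕ) :
    Stirling.stirlingSeq (m + 2) < Stirling.stirlingSeq (m + 1) := by
  have hsum := Stirling.log_stirlingSeq_diff_hasSum m
  have hpos : (0 : ℝ) <
      Real.log (Stirling.stirlingSeq (m + 1)) - Real.log (Stirling.stirlingSeq (m + 2)) := by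
    refine hasSum_lt (f := fun _ : ℕ => (0 : ℝ)) (i := 0) ?_ ?_ hasSum_zero hsum
    · intro k; positivity
    · positivity
  have h1 := Stirling.stirlingSeq'_pos m
  have h2 := Stirling.stirlingSeq'_pos (m + 1)
  exact (Real.log_lt_log_iff h2 h1).mp (by linarith)

lemma sqrt_pi_le_stirlingSeq (m : ℕ) :
    Real.sqrt π ≤ Stirling.stirlingSeq (m + 1) := by
  refine le_of_tendsto Stirling.tendsto_stirlingSeq_sqrt_pi ?_
  filter_upwards [Filter.eventually_ge_atTop (m + 1)] with k hk
  have h := Stirling.stirlingSeq'_antitone (a := m) (b := k - 1) (by omega)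
  simpa [Function.comp, Nat.sub_add_cancel (by omega : 1 ≤ k)] using h

lemma stirlingSeq_gt_sqrt_pi (n : ℕ) (hn : 1 ≤ n) :
    Real.sqrt π < Stirling.stirlingSeq n := by
  obtain ⟨m, rfl⟩ : ∃ m, n = m + 1 := ⟨n - 1, by omega⟩
  exact lt_of_le_of_lt (sqrt_pi_le_stirlingSeq (m + 1)) (stirlingSeq_strict_succ m)

lemma key_eq (n : ℕ) (hn : 1 ≤ n) :
    (Nat.factorial n : ℝ) * Real.exp n / (n : ℝ) ^ ((n : ℝ) + 1 / 2)
      = Real.sqrt 2 * Stirling.stirlingSeq n := by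
  have hn0 : (0 : ℝ) < (n : ℝ) := by exact_mod_cast hn
  rw [Stirling.stirlingSeq, Real.rpow_add hn0, Real.rpow_natCast,
    ← Real.sqrt_eq_rpow, show (2 : ℝ) * n = 2 * n from rfl, Real.sqrt_mul (by norm_num : (0:ℝ) ≤ 2)]
  rw [show Real.exp (n : ℝ) = Real.exp 1 ^ n by
    rw [← Real.exp_one_rpow (n : ℝ), Real.rpow_natCast]]
  have h1 : (0:ℝ) < Real.sqrt 2 := by positivity
  have h2 : (0:ℝ) < Real.sqrt n := Real.sqrt_pos.mpr hn0
  have h3 : (0:ℝ) < Real.exp 1 ^ n := by positivity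
  field_simp
  ring_nf
  rw [inv_pow]
  field_simp

/-- for every positive integer `n`,
`√(2π) < n! eⁿ / n^(n + 1/2) ≤ e`. -/
theorem stmt_14 (n : ℕ) (hn : 1 ≤ n) :
    Real.sqrt (2 * π)
        < (Nat.factorial n : ℝ) * Real.exp n / (n : ℝ) ^ ((n : ℝ) + 1 / 2) ∧
    (Nat.factorial n : ℝ) * Real.exp n / (n : ℝ) ^ ((n : ℝ) + 1 / 2)
        ≤ Real.exp 1 := by
  rw [key_eq n hn]
  constructor
  · rw [Real.sqrt_mul (by norm_num : (0:ℝ) ≤ 2)]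
    exact mul_lt_mul_of_pos_left (stirlingSeq_gt_sqrt_pi n hn) (by positivity)
  · have h1 : Stirling.stirlingSeq n ≤ Stirling.stirlingSeq 1 := by
      obtain ⟨m, rfl⟩ : ∃ m, n = m + 1 := ⟨n - 1, by omega⟩
      have h := Stirling.stirlingSeq'_antitone (a := 0) (b := m) (Nat.zero_le m)
      simpa [Function.comp] using h
    calc Real.sqrt 2 * Stirling.stirlingSeq n ≤ Real.sqrt 2 * Stirling.stirlingSeq 1 :=
          mul_le_mul_of_nonneg_left h1 (by positivity)
      _ = Real.exp 1 := by
          rw [Stirling.stirlingSeq_one]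
          field_simp
end
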